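/- Let x be a real number with x ≥ 2 and let k be a positive integer. Define R : ℕ → ℝ → ℝ by R 0 x = x and R (j+1) x = √(2 + R j x) (real square roots), set R̃ k x = √(R (k−1) x − 2), and set y = (x + √(x² − 4)) / 2. Then R̃ k x = y^(1/2^k) − y^(−1/2^k), where real powers (Real.rpow) are used. -/
import Mathlib

open Filter Real

/-- `nyblomR j x = √(2 + √(2 + ⋯ + √(2 + x)))` with `j` square roots:
`nyblomR 0 x = x`, `nyblomR (j+1) x = √(2 + nyblomR j x)`. -/
noncomputable def nyblomR : ℕ → ℝ → ℝ
  | 0, x => x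
  | j + 1, x => Real.sqrt (2 + nyblomR j x)

lemma nyblom_aux (x : ℝ) (hx : 2 ≤ x) (j : ℕ) :
    nyblomR j x = ((x + Real.sqrt (x ^ 2 - 4)) / 2) ^ ((1 : ℝ) / 2 ^ j) +
      ((x + Real.sqrt (x ^ 2 - 4)) / 2) ^ (-((1 : ℝ) / 2 ^ j)) := by
  have h4 : (0:ℝ) ≤ x ^ 2 - 4 := by nlinarith
  have hs : 0 ≤ Real.sqrt (x ^ 2 - 4) := Real.sqrt_nonneg _
  set y : ℝ := (x + Real.sqrt (x ^ 2 - 4)) / 2 with hy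
  have hy1 : 1 ≤ y := by
    rw [hy]; linarith
  have hypos : 0 < y := lt_of_lt_of_le one_pos hy1
  have hsq : Real.sqrt (x ^ 2 - 4) ^ 2 = x ^ 2 - 4 := Real.sq_sqrt h4
  have hyx : y ^ 2 + 1 = x * y := by
    rw [hy]; field_simp; nlinarith
  induction j with
  | zero =>
      simp only [nyblomR, pow_zero, div_one, Real.rpow_one, Real.rpow_neg_one]
      field_simp
      nlinarith
  | succ j ih =>
      have ht : ((1:ℝ) / 2 ^ (j+1)) * 2 = 1 / 2 ^ j := by
        rw [pow_succ]; field_simp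
      set c : ℝ := y ^ ((1:ℝ) / 2 ^ (j+1)) with hc
      have hcpos : 0 < c := Real.rpow_pos_of_pos hypos _
      have hc2 : c ^ 2 = y ^ ((1:ℝ) / 2 ^ j) := by
        rw [hc, ← Real.rpow_natCast (y ^ ((1:ℝ)/2^(j+1))) 2, ← Real.rpow_mul hypos.le]
        norm_num
        congr 1
        rw [pow_succ]
        field_simp
      have hneg : ∀ t : ℝ, y ^ (-t) = (y ^ t)⁻¹ := fun t => Real.rpow_neg hypos.le t
      show Real.sqrt (2 + nyblomR j x) = c + y ^ (-((1:ℝ)/2^(j+1)))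
      rw [hneg, ih, hneg]
      have key : 2 + (y ^ ((1:ℝ)/2^j) + (y ^ ((1:ℝ)/2^j))⁻¹) = (c + c⁻¹) ^ 2 := by
        rw [← hc2]
        field_simp
        ring
      rw [key, Real.sqrt_sq (by positivity)]

/-- Nyblom (2005), second identity: for `x ≥ 2` and `k ≥ 1`, with
`y = (x + √(x² − 4))/2`, the `k`-fold nested radical
`√(−2 + √(2 + ⋯ + √(2 + x)))`, i.e. `√(nyblomR (k−1) x − 2)`, equals
`y^(1/2^k) − y^(−1/2^k)`. -/
theorem nyblom_nested_radical_minus (x : ℝ) (hx : 2 ≤ x) (k : ℕ) (hk : 0 < k) :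
    Real.sqrt (nyblomR (k - 1) x - 2) =
      ((x + Real.sqrt (x ^ 2 - 4)) / 2) ^ ((1 : ℝ) / 2 ^ k) -
        ((x + Real.sqrt (x ^ 2 - 4)) / 2) ^ (-(1 : ℝ) / 2 ^ k) := by
  obtain ⟨m, rfl⟩ : ∃ m, k = m + 1 := ⟨k - 1, (Nat.succ_pred_eq_of_pos hk).symm⟩
  have h4 : (0:ℝ) ≤ x ^ 2 - 4 := by nlinarith
  have hs : 0 ≤ Real.sqrt (x ^ 2 - 4) := Real.sqrt_nonneg _
  set y : ℝ := (x + Real.sqrt (x ^ 2 - 4)) / 2 with hy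
  have hy1 : 1 ≤ y := by rw [hy]; linarith
  have hypos : 0 < y := lt_of_lt_of_le one_pos hy1
  have ht : ((1:ℝ) / 2 ^ (m+1)) * 2 = 1 / 2 ^ m := by
    rw [pow_succ]; field_simp
  set c : ℝ := y ^ ((1:ℝ) / 2 ^ (m+1)) with hc
  have hcpos : 0 < c := Real.rpow_pos_of_pos hypos _
  have hc1 : 1 ≤ c := Real.one_le_rpow hy1 (by positivity)
  have hc2 : c ^ 2 = y ^ ((1:ℝ) / 2 ^ m) := by
    rw [hc, ← Real.rpow_natCast (y ^ ((1:ℝ)/2^(m+1))) 2, ← Real.rpow_mul hypos.le]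
    norm_num
    congr 1
    rw [pow_succ]
    field_simp
  have hneg : ∀ t : ℝ, y ^ (-t) = (y ^ t)⁻¹ := fun t => Real.rpow_neg hypos.le t
  have hmk : m + 1 - 1 = m := rfl
  rw [hmk, nyblom_aux x hx m, hneg, ← hc2]
  have hnd : -(1:ℝ) / 2 ^ (m+1) = -((1:ℝ) / 2 ^ (m+1)) := by ring
  rw [hnd, hneg, ← hc]
  have key : c ^ 2 + (c ^ 2)⁻¹ - 2 = (c - c⁻¹) ^ 2 := by
    field_simp; ring
  rw [key, Real.sqrt_sq]
  have : c⁻¹ ≤ 1 := inv_le_one_of_one_le₀ hc1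
  linarith
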